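/- Degeneracy for continuous-time walks on non-Abelian Cayley graphs: let G be a finite non-Abelian group and let U be a unitary operator on the space (G → ℂ) that commutes with λ(g) for every g ∈ G, where λ is the left regular representation. Then U has an eigenvalue μ whose eigenspace has dimension at least 2 (U is degenerate). -/

import Mathlib

/-!
A unitary operator on a finite-dimensional inner product space is diagonalisable, since the
orthogonal complement of an invariant subspace is again invariant. If all eigenspaces of `U`
were lines, every operator commuting with `U` would act by a scalar on each of them, so the
operators `λ(g)` would commute pairwise; as `λ` is faithful, `G` would be Abelian.
-/

/-- The left regular representation of `G` on `G → ℂ` (modelled as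
`EuclideanSpace ℂ G`), given by `(λ(g) f)(x) = f (g⁻¹ x)`. -/
def leftRegRep (G : Type*) [Group G] (g : G) :
    EuclideanSpace ℂ G →ₗ[ℂ] EuclideanSpace ℂ G where
  toFun v := WithLp.toLp 2 (fun x => v (g⁻¹ * x))
  map_add' _ _ := rfl
  map_smul' _ _ := rfl

open Module Module.End

namespace Module.End

section InnerProductSpace

open LinearMap

variable {𝕜 E : Type*} [RCLike 𝕜] [NormedAddCommGroup E] [InnerProductSpace 𝕜 E]
  [FiniteDimensional 𝕜 E] {U : End 𝕜 E}

lemma orthogonal_mem_invtSubmodule_of_mem_unitary (hU : U ∈ unitary (End 𝕜 E))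
    {p : Submodule 𝕜 E} (hp : p ∈ U.invtSubmodule) : pᗮ ∈ U.invtSubmodule := by
  have hUU : adjoint U * U = 1 := by rw [← star_eq_adjoint]; exact Unitary.star_mul_self_of_mem hU
  have hUinj : Function.Injective U := Function.LeftInverse.injective (g := adjoint U) fun x => by
    rw [← mul_apply, hUU, one_apply]
  have hinj : Function.Injective (U.restrict hp) := fun x y hxy =>
    Subtype.ext <| hUinj <| congr_arg Subtype.val hxy
  intro x hx y hy
  -- `U` restricts to a bijection of the finite-dimensional `p`, so `adjoint U = U⁻¹` preserves it.
  obtain ⟨z, hz⟩ := injective_iff_surjective.mp hinj ⟨y, hy⟩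
  have hzy : U z = y := congr_arg Subtype.val hz
  rw [← hzy, ← adjoint_inner_left, ← mul_apply, hUU]
  exact hx z z.2

lemma isSemisimple_of_mem_unitary (hU : U ∈ unitary (End 𝕜 E)) : U.IsSemisimple :=
  isSemisimple_iff.mpr fun p hp =>
    ⟨pᗮ, orthogonal_mem_invtSubmodule_of_mem_unitary hU hp, p.isCompl_orthogonal⟩

end InnerProductSpace

variable {K V : Type*} [Field K] [AddCommGroup V] [Module K V]

lemma commute_of_finrank_le_one [FiniteDimensional K V] (h : finrank K V ≤ 1) (a b : End K V) :
    Commute a b := by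
  obtain ⟨v, hv⟩ := finrank_le_one_iff.mp h
  obtain ⟨ca, ha⟩ := hv (a v)
  obtain ⟨cb, hb⟩ := hv (b v)
  ext w
  obtain ⟨c, rfl⟩ := hv w
  simp only [mul_apply, map_smul, ← ha, ← hb, smul_smul, mul_comm ca cb]

lemma commute_of_commute_of_iSup_eigenspace_eq_top [FiniteDimensional K V] {f a b : End K V}
    (hf : ⨆ μ, f.eigenspace μ = ⊤) (hdim : ∀ μ, finrank K (f.eigenspace μ) ≤ 1)
    (ha : Commute f a) (hb : Commute f b) : Commute a b := by
  suffices ⨆ μ, f.eigenspace μ ≤ LinearMap.eqLocus (a * b) (b * a) from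
    LinearMap.ext fun v => this (hf ▸ Submodule.mem_top)
  refine iSup_le fun μ v hv => ?_
  have hab := commute_of_finrank_le_one (hdim μ)
    (a.restrict (mapsTo_genEigenspace_of_comm ha μ 1))
    (b.restrict (mapsTo_genEigenspace_of_comm hb μ 1))
  exact congr_arg Subtype.val (LinearMap.congr_fun hab ⟨v, hv⟩)

end Module.End

section leftRegRep

variable {G : Type*} [Group G]

@[simp]
lemma leftRegRep_apply (g : G) (v : EuclideanSpace ℂ G) (x : G) :
    leftRegRep G g v x = v (g⁻¹ * x) := rfl

lemma leftRegRep_mul (a b : G) : leftRegRep G (a * b) = leftRegRep G a * leftRegRep G b := by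
  ext v x
  simp [mul_assoc]

lemma leftRegRep_injective : Function.Injective (leftRegRep G) := by
  classical
  intro a b hab
  simpa [inv_mul_eq_one, eq_comm] using congr_arg (fun T => T (EuclideanSpace.single 1 1) a) hab

lemma Commute.of_leftRegRep {a b : G} (h : Commute (leftRegRep G a) (leftRegRep G b)) :
    Commute a b :=
  leftRegRep_injective <| by rw [leftRegRep_mul, leftRegRep_mul]; exact h

end leftRegRep

/-- Degeneracy for continuous-time walks on non-Abelian Cayley graphs: if `G` is a
finite non-Abelian group and `U` is a unitary on `G → ℂ` commuting with the left
regular representation `λ(g)` for every `g`, then `U` has an eigenvalue whose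
eigenspace has dimension at least `2`. -/
theorem nonabelian_cayley_continuous_walk_degenerate
    {G : Type*} [Group G] [Fintype G] (hG : ∃ a b : G, a * b ≠ b * a)
    (U : EuclideanSpace ℂ G →ₗ[ℂ] EuclideanSpace ℂ G)
    (hU : U ∈ unitary (EuclideanSpace ℂ G →ₗ[ℂ] EuclideanSpace ℂ G))
    (hcomm : ∀ g : G, U * leftRegRep G g = leftRegRep G g * U) :
    ∃ μ : ℂ, 2 ≤ Module.finrank ℂ (Module.End.eigenspace U μ) := by
  by_contra! hdeg
  obtain ⟨a, b, hab⟩ := hG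
  have hdiag : ⨆ μ, eigenspace U μ = ⊤ :=
    (isSemisimple_of_mem_unitary hU).iSup_eigenspace_eq_top
  have hlines : ∀ μ, finrank ℂ (eigenspace U μ) ≤ 1 := fun μ => Nat.le_of_lt_succ (hdeg μ)
  exact hab <| Commute.of_leftRegRep <|
    commute_of_commute_of_iSup_eigenspace_eq_top hdiag hlines (hcomm a) (hcomm b)
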